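/- (Dyson's conjecture) Let a_0, a_1, …, a_n be nonnegative integers. Then CT_x ∏_{0≤i≠j≤n} (1 − x_i/x_j)^{a_i} = (a_0 + a_1 + ⋯ + a_n)! / (a_0! · a_1! ⋯ a_n!), where the product is over all ordered pairs (i,j) with 0 ≤ i, j ≤ n and i ≠ j. -/

import Mathlib

/-
Good's proof. Put `U_i = ∏_{j ≠ i} (1 - x_i/x_j)`, so the product is `D(a) = ∏_i U_i^{a_i}`.
Lagrange interpolation of the constant `1` at the nodes `x_i`, evaluated at `0`, reads
`∑_i ∏_{j ≠ i} x_j / (x_j - x_i) = 1`; clearing denominators gives `∏_i U_i = ∑_i ∏_{l ≠ i} U_l`,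
hence `D(a) = ∑_i D(a - e_i)` when every `a_i > 0`. This is the recurrence of the multinomial
coefficients. If `a_k = 0`, then `x_k` enters `D(a)` only through `∏_i (1 - x_i/x_k)^{a_i}`, which
is `1` plus monomials of negative degree in `x_k`, while the remaining factor is free of `x_k`;
so deleting the index `k` does not change the constant term, nor the multinomial coefficient.
-/

open Finset

noncomputable section

/-- Laurent polynomials in the variables `x_0,…,x_n` over `ℚ`. -/
abbrev LP (N : ℕ) : Type := AddMonoidAlgebra ℚ (Fin N →₀ ℤ)

def Xp {N : ℕ} (i : Fin N) : LP N := AddMonoidAlgebra.single (Finsupp.single i 1) 1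

def Xi {N : ℕ} (i : Fin N) : LP N := AddMonoidAlgebra.single (Finsupp.single i (-1)) 1

/-- The constant term: the coefficient of `x_0^0 ⋯ x_n^0`. -/
def CT {N : ℕ} (F : LP N) : ℚ := F.coeff 0

open scoped Pointwise

namespace AddMonoidAlgebra

variable {R M : Type*}

theorem mul_mem_supported_add [Semiring R] [Add M] {s t : Set M} {x y : R[M]}
    (hx : x ∈ supported R R s) (hy : y ∈ supported R R t) : x * y ∈ supported R R (s + t) := by
  classical
  rw [mem_supported] at *
  refine (Finset.coe_subset.2 (support_coeff_mul_subset x y)).trans ?_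
  rw [Finset.coe_add]
  exact Set.add_subset_add hx hy

variable [CommRing R] [AddMonoid M]

def oneAddNegDegree (φ : M →+ ℤ) : Submonoid R[M] where
  carrier := {E | E - 1 ∈ supported R R {m | φ m < 0}}
  one_mem' := by simp
  mul_mem' {E F} hE hF := by
    have hneg : {m | φ m < 0} + {m | φ m < 0} ⊆ {m | φ m < 0} := by
      rintro _ ⟨a, ha, b, hb, rfl⟩
      simp only [Set.mem_ofPred_eq, map_add] at *
      omega
    show E * F - 1 ∈ supported R R {m | φ m < 0}
    rw [show E * F - 1 = (E - 1) * (F - 1) + (E - 1) + (F - 1) by noncomm_ring]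
    exact add_mem (add_mem (supported_mono hneg (mul_mem_supported_add hE hF)) hE) hF

theorem coeff_zero_mul_of_mem_oneAddNegDegree {φ : M →+ ℤ} {G E : R[M]}
    (hG : G ∈ gradeBy R φ 0) (hE : E ∈ oneAddNegDegree φ) : (G * E).coeff 0 = G.coeff 0 := by
  have hsub : {m | φ m = 0} + {m | φ m < 0} ⊆ {m | φ m < 0} := by
    rintro _ ⟨a, ha, b, hb, rfl⟩
    simp only [Set.mem_ofPred_eq, map_add] at *
    omega
  have hneg := supported_mono hsub (mul_mem_supported_add (R := R) hG hE)
  have h0 : (G * (E - 1)).coeff 0 = 0 := mem_supported'.1 hneg 0 (by simp)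
  rw [mul_sub, mul_one, coeff_sub] at h0
  exact sub_eq_zero.1 h0

end AddMonoidAlgebra

section

variable {ι : Type*} [DecidableEq ι] {s : Finset ι}

theorem Lagrange.sum_prod_erase_div_sub_eq_one {F : Type*} [Field F] (hs : s.Nonempty)
    {v : ι → F} (hv : Set.InjOn v s) :
    ∑ i ∈ s, ∏ j ∈ s.erase i, v j / (v j - v i) = 1 := by
  have h := congrArg (Polynomial.eval 0) (Lagrange.sum_basis hv hs)
  rw [Polynomial.eval_finsetSum, Polynomial.eval_one] at h
  rw [← h]
  refine sum_congr rfl fun i _ ↦ ?_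
  rw [Lagrange.basis, Polynomial.eval_prod]
  refine prod_congr rfl fun j _ ↦ ?_
  simp only [Lagrange.basisDivisor, Polynomial.eval_mul, Polynomial.eval_sub, Polynomial.eval_X,
    Polynomial.eval_C]
  rw [div_eq_mul_inv, ← neg_sub (v j), inv_neg]
  ring

theorem prod_prod_erase_sub_eq_sum_of_injOn {F : Type*} [Field F] (hs : s.Nonempty)
    {v : ι → F} (hv : Set.InjOn v s) :
    ∏ i ∈ s, ∏ j ∈ s.erase i, (v j - v i) =
      ∑ i ∈ s, (∏ j ∈ s.erase i, v j) * ∏ l ∈ s.erase i, ∏ j ∈ s.erase l, (v j - v l) := by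
  set D : ι → F := fun i ↦ ∏ j ∈ s.erase i, (v j - v i)
  have hD : ∀ i ∈ s, D i ≠ 0 := fun i hi ↦ prod_ne_zero_iff.2 fun j hj ↦
    sub_ne_zero.2 fun h ↦ (ne_of_mem_erase hj) (hv (mem_of_mem_erase hj) hi h)
  have hterm : ∀ i ∈ s, (∏ j ∈ s.erase i, v j) * ∏ l ∈ s.erase i, D l =
      (∏ j ∈ s.erase i, v j / (v j - v i)) * ∏ l ∈ s, D l := by
    intro i hi
    rw [← mul_prod_erase s D hi, prod_div_distrib, div_mul_eq_mul_div, mul_div_assoc,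
      mul_div_cancel_left₀ _ (hD i hi)]
  rw [sum_congr rfl hterm, ← sum_mul, Lagrange.sum_prod_erase_div_sub_eq_one hs hv, one_mul]

theorem prod_prod_erase_sub_eq_sum {R : Type*} [CommRing R] (hs : s.Nonempty) (v : ι → R) :
    ∏ i ∈ s, ∏ j ∈ s.erase i, (v j - v i) =
      ∑ i ∈ s, (∏ j ∈ s.erase i, v j) * ∏ l ∈ s.erase i, ∏ j ∈ s.erase l, (v j - v l) := by
  -- It suffices to treat the generic points `X i`, which are distinct in a field.
  let K := FractionRing (MvPolynomial ι ℤ)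
  have hinj : Function.Injective (algebraMap (MvPolynomial ι ℤ) K) := IsFractionRing.injective _ _
  have hX : ∏ i ∈ s, ∏ j ∈ s.erase i, (MvPolynomial.X j - MvPolynomial.X i) =
      ∑ i ∈ s, (∏ j ∈ s.erase i, MvPolynomial.X j) *
        ∏ l ∈ s.erase i, ∏ j ∈ s.erase l, (MvPolynomial.X (R := ℤ) j - MvPolynomial.X l) := by
    apply hinj
    simp only [map_prod, map_sum, map_mul, map_sub]
    exact prod_prod_erase_sub_eq_sum_of_injOn hs fun i _ j _ h ↦ MvPolynomial.X_injective (hinj h)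
  simpa using congrArg (MvPolynomial.aeval v) hX

theorem Finset.sum_update_sub_one {f : ι → ℕ} {i : ι} (hi : i ∈ s) (hf : f i ≠ 0) :
    ∑ j ∈ s, Function.update f i (f i - 1) j = ∑ j ∈ s, f j - 1 := by
  rw [sum_update_of_mem hi, ← add_sum_erase s f hi, sdiff_singleton_eq_erase]
  omega

theorem Nat.multinomial_eq_sum_update (hs : s.Nonempty) {f : ι → ℕ} (hf : ∀ i ∈ s, f i ≠ 0) :
    Nat.multinomial s f = ∑ i ∈ s, Nat.multinomial s (Function.update f i (f i - 1)) := by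
  have hterm : ∀ i ∈ s, (∏ j ∈ s, (f j).factorial) *
      Nat.multinomial s (Function.update f i (f i - 1)) = f i * (∑ j ∈ s, f j - 1).factorial := by
    intro i hi
    have hprod : ∏ j ∈ s, (f j).factorial =
        f i * ∏ j ∈ s, (Function.update f i (f i - 1) j).factorial := by
      rw [← mul_prod_erase s _ hi, ← mul_prod_erase s _ hi, Function.update_self, ← mul_assoc,
        Nat.mul_factorial_pred (hf i hi)]
      congr 1
      exact prod_congr rfl fun j hj ↦ by rw [Function.update_of_ne (ne_of_mem_erase hj)]
    rw [hprod, mul_assoc, Nat.multinomial_spec, sum_update_sub_one hi (hf i hi)]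
  have hpos : ∑ j ∈ s, f j ≠ 0 := by
    obtain ⟨i, hi⟩ := hs
    have := single_le_sum (fun j _ ↦ Nat.zero_le (f j)) hi
    have := hf i hi
    omega
  apply Nat.eq_of_mul_eq_mul_left (Nat.prod_factorial_pos s f)
  rw [Nat.multinomial_spec, mul_sum, sum_congr rfl hterm, ← sum_mul, Nat.mul_factorial_pred hpos]

end

variable {N : ℕ}

theorem Xp_mul_Xi (i : Fin N) : Xp i * Xi i = 1 := by
  simp [Xp, Xi, AddMonoidAlgebra.one_def]

theorem isUnit_Xp (i : Fin N) : IsUnit (Xp i) := .of_mul_eq_one _ (Xp_mul_Xi i)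

theorem Xp_sub_Xp_eq_mul (i j : Fin N) : Xp j - Xp i = Xp j * (1 - Xp i * Xi j) := by
  rw [mul_sub, mul_one, mul_left_comm, Xp_mul_Xi, mul_one]

theorem Xp_mul_Xi_eq_single (i j : Fin N) :
    Xp i * Xi j = AddMonoidAlgebra.single (Finsupp.single i 1 + Finsupp.single j (-1)) 1 := by
  rw [Xp, Xi, AddMonoidAlgebra.single_mul_single, mul_one]

def dysonFactor (s : Finset (Fin N)) (i : Fin N) : LP N := ∏ j ∈ s.erase i, (1 - Xp i * Xi j)

def dysonProduct (s : Finset (Fin N)) (a : Fin N → ℕ) : LP N := ∏ i ∈ s, dysonFactor s i ^ a i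

theorem prod_dysonFactor_eq_sum {s : Finset (Fin N)} (hs : s.Nonempty) :
    ∏ i ∈ s, dysonFactor s i = ∑ i ∈ s, ∏ l ∈ s.erase i, dysonFactor s l := by
  set V : Fin N → LP N := fun i ↦ ∏ j ∈ s.erase i, Xp j
  have hV : IsUnit (∏ i ∈ s, V i) :=
    IsUnit.prod_iff.2 fun i _ ↦ IsUnit.prod_iff.2 fun j _ ↦ isUnit_Xp j
  have h := prod_prod_erase_sub_eq_sum hs (Xp (N := N))
  simp only [Xp_sub_Xp_eq_mul, prod_mul_distrib] at h
  simp only [dysonFactor]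
  refine hV.mul_left_cancel (h.trans ?_)
  rw [mul_sum]
  refine sum_congr rfl fun i hi ↦ ?_
  rw [← mul_assoc, mul_prod_erase s V hi]

theorem dysonProduct_eq_sum_update {s : Finset (Fin N)} (hs : s.Nonempty) {a : Fin N → ℕ}
    (ha : ∀ i ∈ s, a i ≠ 0) :
    dysonProduct s a = ∑ i ∈ s, dysonProduct s (Function.update a i (a i - 1)) := by
  set U := dysonFactor s
  have hupdate : ∀ i ∈ s, dysonProduct s (Function.update a i (a i - 1)) =
      (∏ l ∈ s, U l ^ (a l - 1)) * ∏ l ∈ s.erase i, U l := by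
    intro i hi
    rw [dysonProduct, ← mul_prod_erase s _ hi, ← mul_prod_erase s _ hi, Function.update_self,
      mul_assoc, ← prod_mul_distrib]
    congr 1
    refine prod_congr rfl fun l hl ↦ ?_
    rw [Function.update_of_ne (ne_of_mem_erase hl), ← pow_succ, Nat.sub_add_cancel
      (Nat.one_le_iff_ne_zero.2 (ha l (mem_of_mem_erase hl)))]
  have hsplit : dysonProduct s a = (∏ l ∈ s, U l ^ (a l - 1)) * ∏ l ∈ s, U l := by
    rw [dysonProduct, ← prod_mul_distrib]
    refine prod_congr rfl fun l hl ↦ ?_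
    rw [← pow_succ, Nat.sub_add_cancel (Nat.one_le_iff_ne_zero.2 (ha l hl))]
  rw [hsplit, prod_dysonFactor_eq_sum hs, mul_sum]
  exact sum_congr rfl fun i hi ↦ (hupdate i hi).symm

theorem CT_sum {ι : Type*} (s : Finset ι) (f : ι → LP N) :
    CT (∑ i ∈ s, f i) = ∑ i ∈ s, CT (f i) := by
  simp [CT]

theorem dysonProduct_mem_gradeBy_zero {t : Finset (Fin N)} {k : Fin N} (hk : k ∉ t)
    (a : Fin N → ℕ) :
    dysonProduct t a ∈ AddMonoidAlgebra.gradeBy ℚ (Finsupp.applyAddHom k) 0 := by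
  show dysonProduct t a ∈
    SetLike.GradeZero.subring (AddMonoidAlgebra.gradeBy ℚ (Finsupp.applyAddHom (M := ℤ) k))
  refine prod_mem fun i hi ↦ pow_mem (prod_mem fun j hj ↦ sub_mem (one_mem _) ?_) _
  have hik : i ≠ k := ne_of_mem_of_not_mem hi hk
  have hjk : j ≠ k := ne_of_mem_of_not_mem (mem_of_mem_erase hj) hk
  show _ ∈ AddMonoidAlgebra.gradeBy ℚ (Finsupp.applyAddHom k) 0
  rw [Xp_mul_Xi_eq_single]
  convert AddMonoidAlgebra.single_mem_gradeBy (R := ℚ) (Finsupp.applyAddHom k)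
    (Finsupp.single i 1 + Finsupp.single j (-1)) 1 using 2
  simp [hik.symm, hjk.symm]

theorem one_sub_Xp_mul_Xi_mem_oneAddNegDegree {i k : Fin N} (hik : i ≠ k) :
    1 - Xp i * Xi k ∈ AddMonoidAlgebra.oneAddNegDegree (Finsupp.applyAddHom k) := by
  show 1 - Xp i * Xi k - 1 ∈ AddMonoidAlgebra.supported ℚ ℚ {m | Finsupp.applyAddHom k m < 0}
  rw [sub_sub_cancel_left, Xp_mul_Xi_eq_single]
  refine neg_mem (Finsupp.single_mem_supported ℚ 1 ?_)
  simp [hik]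

theorem CT_dysonProduct_insert {t : Finset (Fin N)} {k : Fin N} (hk : k ∉ t) {a : Fin N → ℕ}
    (hak : a k = 0) : CT (dysonProduct (insert k t) a) = CT (dysonProduct t a) := by
  have hfactor : ∀ i ∈ t, dysonFactor (insert k t) i = (1 - Xp i * Xi k) * dysonFactor t i := by
    intro i hi
    rw [dysonFactor, erase_insert_of_ne (ne_of_mem_of_not_mem hi hk).symm,
      prod_insert fun h ↦ hk (mem_of_mem_erase h), dysonFactor]
  have hsplit : dysonProduct (insert k t) a =
      dysonProduct t a * ∏ i ∈ t, (1 - Xp i * Xi k) ^ a i := by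
    rw [dysonProduct, prod_insert hk, hak, pow_zero, one_mul, dysonProduct, ← prod_mul_distrib]
    refine prod_congr rfl fun i hi ↦ ?_
    rw [hfactor i hi, mul_pow, mul_comm]
  rw [hsplit, CT, CT]
  refine AddMonoidAlgebra.coeff_zero_mul_of_mem_oneAddNegDegree
    (dysonProduct_mem_gradeBy_zero hk a) (prod_mem fun i hi ↦ pow_mem ?_ _)
  exact one_sub_Xp_mul_Xi_mem_oneAddNegDegree (ne_of_mem_of_not_mem hi hk)

theorem CT_dysonProduct (s : Finset (Fin N)) (a : Fin N → ℕ) :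
    CT (dysonProduct s a) = Nat.multinomial s a := by
  rcases s.eq_empty_or_nonempty with rfl | hs
  · simp [dysonProduct, CT]
  by_cases hz : ∀ i ∈ s, a i ≠ 0
  · rw [dysonProduct_eq_sum_update hs hz, CT_sum, Nat.multinomial_eq_sum_update hs hz]
    push_cast
    exact sum_congr rfl fun i hi ↦ CT_dysonProduct s _
  · obtain ⟨k, hk, hak⟩ : ∃ k ∈ s, a k = 0 := by simpa using hz
    rw [← insert_erase hk, CT_dysonProduct_insert (notMem_erase k s) hak,
      Nat.multinomial_insert (notMem_erase k s), hak, Nat.choose_zero_right, one_mul]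
    exact CT_dysonProduct (s.erase k) a
termination_by (∑ i ∈ s, a i) + s.card
decreasing_by
  · rw [sum_update_sub_one hi (hz i hi)]
    have := single_le_sum (fun j _ ↦ Nat.zero_le (a j)) hi
    have := hz i hi
    omega
  · rw [sum_erase s hak]
    exact Nat.add_lt_add_left (card_erase_lt_of_mem hk) _

/-- Dyson's conjecture (Theorem 1.2):
`CT_x ∏_{0≤i≠j≤n} (1 - x_i/x_j)^{a_i} = (a_0+⋯+a_n)!/(a_0!⋯a_n!)`. -/
theorem stmt15 (n : ℕ) (a : Fin (n + 1) → ℕ) :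
    CT (∏ p ∈ Finset.univ.filter (fun p : Fin (n + 1) × Fin (n + 1) => p.1 ≠ p.2),
        (1 - Xp p.1 * Xi p.2) ^ a p.1) =
      (Nat.factorial (∑ i, a i) : ℚ) / ∏ i, (Nat.factorial (a i) : ℚ) := by
  have hprod : ∏ p ∈ Finset.univ.filter (fun p : Fin (n + 1) × Fin (n + 1) => p.1 ≠ p.2),
      (1 - Xp p.1 * Xi p.2) ^ a p.1 = dysonProduct univ a := by
    rw [prod_finset_product _ univ (fun i ↦ univ.erase i) (by simp [eq_comm])]
    simp only [dysonProduct, dysonFactor, prod_pow]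
  rw [hprod, CT_dysonProduct, eq_div_iff (by positivity), mul_comm]
  exact_mod_cast Nat.multinomial_spec univ a
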